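/- Let T_r be a rooted tree with thinness k and critical vertex x. If v is an ancestor of x, then x is also a critical vertex of the complete rooted subtree of T_r rooted at v. -/

import Mathlib

open SimpleGraph

variable {V : Type*}

def Consistent (G : SimpleGraph V) (r : V → V → Prop) {k : ℕ} (C : V → Fin k) : Prop :=
  ∀ u v w, r u v → r v w → C u = C v → G.Adj u w → G.Adj v w

def IsKThin (G : SimpleGraph V) (k : ℕ) : Prop :=
  ∃ r : V → V → Prop, IsStrictTotalOrder V r ∧ ∃ C : V → Fin k, Consistent G r C

noncomputable def Thinness (G : SimpleGraph V) : ℕ := sInf {k | IsKThin G k}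

noncomputable def DanglingThin (G : SimpleGraph V) (v u : V) : ℕ :=
  Thinness (G.induce ((G.deleteEdges {s(v,u)}).connectedComponentMk u).supp)

def KNeighbor (G : SimpleGraph V) (k : ℕ) (x v : V) : Prop :=
  G.Adj x v ∧ ∃ u, G.Adj v u ∧ u ≠ x ∧ k ≤ DanglingThin G v u

def IsChild (G : SimpleGraph V) (rt x v : V) : Prop :=
  G.Adj x v ∧ G.dist rt x + 1 = G.dist rt v

def IsAncestor (G : SimpleGraph V) (rt v x : V) : Prop :=
  v ≠ x ∧ G.dist rt v + G.dist v x = G.dist rt x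

def Subtree (G : SimpleGraph V) (rt v : V) : Set V :=
  {w | G.dist rt v + G.dist v w = G.dist rt w}

def ChildKNeighbor (G : SimpleGraph V) (rt : V) (k : ℕ) (x v : V) : Prop :=
  IsChild G rt x v ∧ KNeighbor G k x v

noncomputable def Critical (G : SimpleGraph V) (rt x : V) : Prop :=
  {v | ChildKNeighbor G rt (Thinness G) x v}.ncard = 2

/-!
Distances from `v` are the same in `G` and in the subtree of `v`, since geodesics from `v` to
its descendants stay among the descendants; so `x` has the same children in both. For a child
`w` of `x` and a neighbour `u ≠ x` of `w`, `u` is a child of `w`, and the component of `u` left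
after deleting `wu` consists of descendants of `u`, so it is the same graph in both trees and the
dangling thinnesses agree. Thinness is monotone under induced subgraphs, and a child
`k`-neighbour of `x` exhibits a dangling component of thinness `≥ k` inside the subtree, so the
subtree also has thinness `k`, and `x` has the same child `k`-neighbours in both.
-/

section Thinness

variable {W : Type*} {G : SimpleGraph V} {H : SimpleGraph W}

lemma IsKThin.comap {k : ℕ} (f : H ↪g G) (h : IsKThin G k) : IsKThin H k := by
  obtain ⟨r, hr, C, hC⟩ := h
  refine ⟨fun a b => r (f a) (f b), ?_, C ∘ f, fun a b c hab hbc hCab hac => ?_⟩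
  · exact (RelEmbedding.preimage f.toEmbedding r).isStrictTotalOrder
  · exact f.map_adj_iff.1 (hC _ _ _ hab hbc hCab (f.map_adj_iff.2 hac))

lemma exists_isKThin [Finite V] (G : SimpleGraph V) : ∃ k, IsKThin G k := by
  obtain ⟨n, ⟨e⟩⟩ := Finite.exists_equiv_fin V
  refine ⟨n, fun a b => e a < e b, ?_, e, fun a b _ hab _ heq _ => absurd heq hab.ne⟩
  exact (RelEmbedding.preimage e.toEmbedding (· < ·)).isStrictTotalOrder

lemma isKThin_thinness [Finite V] (G : SimpleGraph V) : IsKThin G (Thinness G) :=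
  Nat.sInf_mem (exists_isKThin G)

lemma thinness_le_of_embedding [Finite V] (f : H ↪g G) : Thinness H ≤ Thinness G :=
  Nat.sInf_le ((isKThin_thinness G).comap f)

lemma thinness_congr (e : G ≃g H) : Thinness G = Thinness H := by
  unfold Thinness
  congr 1
  ext k
  exact ⟨fun h => h.comap e.symm.toEmbedding, fun h => h.comap e.toEmbedding⟩

end Thinness

section InducedSubgraph

variable {G : SimpleGraph V} {S : Set V}

lemma SimpleGraph.Walk.length_induce {a b : V} (p : G.Walk a b)
    (hp : ∀ z ∈ p.support, z ∈ S) :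
    (p.induce S hp).length = p.length := by
  induction p with
  | nil => rfl
  | cons _ p ih => simp [ih]

lemma dist_induce_of_length_eq_dist {a b : S} (p : G.Walk a b) (hp : p.length = G.dist a b)
    (hS : ∀ z ∈ p.support, z ∈ S) : (G.induce S).dist a b = G.dist a b := by
  refine le_antisymm ((dist_le (p.induce S hS)).trans (p.length_induce hS ▸ hp).le) ?_
  obtain ⟨q, hq⟩ := Reachable.exists_walk_length_eq_dist ⟨p.induce S hS⟩
  calc G.dist a b ≤ (q.map (Embedding.induce S).toHom).length := dist_le _
    _ = (G.induce S).dist a b := by rw [Walk.length_map, hq]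

lemma supp_induce_eq_preimage {u : S} (h : (G.connectedComponentMk u).supp ⊆ S) :
    ((G.induce S).connectedComponentMk u).supp =
      Subtype.val ⁻¹' (G.connectedComponentMk u).supp := by
  classical
  ext z
  simp only [Set.mem_preimage, ConnectedComponent.mem_supp_iff, ConnectedComponent.eq]
  refine ⟨fun hz => hz.map (Embedding.induce S).toHom,
    fun ⟨p⟩ => ⟨p.induce S fun y hy => h ?_⟩⟩
  rw [ConnectedComponent.mem_supp_iff, ConnectedComponent.eq]
  exact ⟨p.dropUntil y hy⟩

def induceInducePreimageIso {B : Set V} (h : B ⊆ S) :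
    (G.induce S).induce (Subtype.val ⁻¹' B) ≃g G.induce B where
  toEquiv := Equiv.subtypeSubtypeEquivSubtype fun hx => h hx
  map_rel_iff' := Iff.rfl

lemma deleteEdges_induce_edge (a b : S) :
    (G.induce S).deleteEdges {s(a, b)} = (G.deleteEdges {s(a.1, b.1)}).induce S := by
  ext c d
  simp [Subtype.ext_iff]

lemma danglingThin_induce (w u : S)
    (h : ((G.deleteEdges {s(w.1, u.1)}).connectedComponentMk u).supp ⊆ S) :
    DanglingThin (G.induce S) w u = DanglingThin G w u := by
  rw [DanglingThin, DanglingThin, deleteEdges_induce_edge, supp_induce_eq_preimage h]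
  exact thinness_congr (induceInducePreimageIso h)

end InducedSubgraph

section RootedTree

variable {G : SimpleGraph V} {rt : V}

lemma mem_subtree_self (v : V) : v ∈ Subtree G rt v := by
  simp [Subtree]

lemma IsChild.mem_subtree {a b : V} (h : IsChild G rt a b) : b ∈ Subtree G rt a := by
  simp [Subtree, dist_eq_one_iff_adj.2 h.1, h.2]

lemma subtree_subset (hc : G.Connected) {u v : V} (hu : u ∈ Subtree G rt v) :
    Subtree G rt u ⊆ Subtree G rt v := by
  intro w hw
  have := hc.dist_triangle (u := rt) (v := v) (w := w)
  have := hc.dist_triangle (u := v) (v := u) (w := w)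
  simp only [Subtree, Set.mem_ofPred_eq] at *
  omega

lemma mem_subtree_of_dist_add_dist (hc : G.Connected) {v w z : V} (hw : w ∈ Subtree G rt v)
    (h : G.dist v z + G.dist z w = G.dist v w) : z ∈ Subtree G rt v := by
  have := hc.dist_triangle (u := rt) (v := v) (w := z)
  have := hc.dist_triangle (u := rt) (v := z) (w := w)
  simp only [Subtree, Set.mem_ofPred_eq] at *
  omega

lemma dist_add_dist_of_mem_support (hc : G.Connected) {a b z : V} (p : G.Walk a b)
    (hp : p.length = G.dist a b) (hz : z ∈ p.support) :
    G.dist a z + G.dist z b = G.dist a b := by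
  classical
  have := dist_le (p.takeUntil z hz)
  have := dist_le (p.dropUntil z hz)
  have := congrArg Walk.length (p.take_spec hz)
  have := hc.dist_triangle (u := a) (v := z) (w := b)
  rw [Walk.length_append] at *
  omega

lemma dist_induce_subtree (hc : G.Connected) {v w : V} (hw : w ∈ Subtree G rt v) :
    (G.induce (Subtree G rt v)).dist ⟨v, mem_subtree_self v⟩ ⟨w, hw⟩ = G.dist v w := by
  obtain ⟨p, hp⟩ := hc.exists_walk_length_eq_dist v w
  exact dist_induce_of_length_eq_dist p hp fun z hz =>
    mem_subtree_of_dist_add_dist hc hw (dist_add_dist_of_mem_support hc p hp hz)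

lemma SimpleGraph.IsTree.isChild_or_isChild (hT : G.IsTree) {a b : V} (hab : G.Adj a b) :
    IsChild G rt a b ∨ IsChild G rt b a := by
  rcases hT.dist_eq_dist_add_one_of_adj rt hab with h | h
  · exact Or.inr ⟨hab.symm, h.symm⟩
  · exact Or.inl ⟨hab, h.symm⟩

lemma IsChild.eq_of_isChild (hT : G.IsTree) {a b c : V} (ha : IsChild G rt a c)
    (hb : IsChild G rt b c) : a = b := by
  obtain ⟨p, hp⟩ := hT.connected.exists_walk_length_eq_dist rt a
  obtain ⟨q, hq⟩ := hT.connected.exists_walk_length_eq_dist rt b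
  have hpc := (p.concat ha.1).isPath_of_length_eq_dist (by rw [Walk.length_concat, hp, ha.2])
  have hqc := (q.concat hb.1).isPath_of_length_eq_dist (by rw [Walk.length_concat, hq, hb.2])
  simpa using congrArg Walk.penultimate ((hT.existsUnique_path rt c).unique hpc hqc)

lemma IsChild.isChild_of_adj (hT : G.IsTree) {x w u : V} (hxw : IsChild G rt x w)
    (hwu : G.Adj w u) (hux : u ≠ x) : IsChild G rt w u :=
  (hT.isChild_or_isChild hwu).resolve_right fun h => hux (h.eq_of_isChild hT hxw)

lemma IsChild.mem_subtree_of_mem_subtree (hT : G.IsTree) {u y z : V} (hyz : IsChild G rt y z)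
    (hz : z ∈ Subtree G rt u) (hzu : z ≠ u) : y ∈ Subtree G rt u := by
  have hc := hT.connected
  obtain ⟨p, hp⟩ := hc.exists_walk_length_eq_dist u z
  have hnil : ¬ p.Nil := fun h => hzu h.eq.symm
  have hadj := p.adj_penultimate hnil
  have hdist : G.dist u p.penultimate + 1 = G.dist u z := by
    have := dist_le p.dropLast
    have := p.length_dropLast_add_one hnil
    have := hc.dist_triangle (u := u) (v := p.penultimate) (w := z)
    have := dist_eq_one_iff_adj.2 hadj
    omega
  have hmem : p.penultimate ∈ Subtree G rt u :=
    mem_subtree_of_dist_add_dist hc hz (by rwa [dist_eq_one_iff_adj.2 hadj])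
  have hchild : IsChild G rt p.penultimate z := by
    refine ⟨hadj, ?_⟩
    simp only [Subtree, Set.mem_ofPred_eq] at hz hmem
    omega
  rwa [hyz.eq_of_isChild hT hchild]

lemma supp_deleteEdges_subset_subtree (hT : G.IsTree) {w u : V} (hwu : IsChild G rt w u) :
    ((G.deleteEdges {s(w, u)}).connectedComponentMk u).supp ⊆ Subtree G rt u := by
  intro z hz
  rw [ConnectedComponent.mem_supp_iff, ConnectedComponent.eq] at hz
  have hgen := (reachable_iff_reflTransGen u z).1 hz.symm
  clear hz
  induction hgen with
  | refl => exact mem_subtree_self u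
  | tail _ hyz ih =>
    rw [deleteEdges_adj] at hyz
    rcases hT.isChild_or_isChild hyz.1 with h | h
    · exact subtree_subset hT.connected ih h.mem_subtree
    · refine h.mem_subtree_of_mem_subtree hT ih ?_
      rintro rfl
      exact hyz.2 (by rw [h.eq_of_isChild hT hwu, Sym2.eq_swap]; rfl)

end RootedTree

section InducedSubtree

variable {G : SimpleGraph V} {rt v : V}

lemma isChild_induce_subtree_iff (hc : G.Connected) {x w : V} (hx : x ∈ Subtree G rt v)
    (hw : w ∈ Subtree G rt v) :
    IsChild (G.induce (Subtree G rt v)) ⟨v, mem_subtree_self v⟩ ⟨x, hx⟩ ⟨w, hw⟩ ↔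
      IsChild G rt x w := by
  rw [IsChild, IsChild, dist_induce_subtree hc hx, dist_induce_subtree hc hw, induce_adj]
  simp only [Subtree, Set.mem_ofPred_eq] at hx hw
  exact and_congr_right fun _ => by omega

lemma danglingThin_induce_subtree (hT : G.IsTree) {w u : V} (hwu : IsChild G rt w u)
    (hw : w ∈ Subtree G rt v) (hu : u ∈ Subtree G rt v) :
    DanglingThin (G.induce (Subtree G rt v)) ⟨w, hw⟩ ⟨u, hu⟩ = DanglingThin G w u :=
  danglingThin_induce _ _
    ((supp_deleteEdges_subset_subtree hT hwu).trans (subtree_subset hT.connected hu))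

lemma kNeighbor_induce_subtree_iff (hT : G.IsTree) {k : ℕ} {x w : V} (hxw : IsChild G rt x w)
    (hx : x ∈ Subtree G rt v) (hw : w ∈ Subtree G rt v) :
    KNeighbor (G.induce (Subtree G rt v)) k ⟨x, hx⟩ ⟨w, hw⟩ ↔ KNeighbor G k x w := by
  simp only [KNeighbor, induce_adj]
  refine and_congr_right fun _ => ⟨?_, ?_⟩
  · rintro ⟨⟨u, hu⟩, hwu, hux, hk⟩
    have hux' : u ≠ x := fun h => hux (Subtype.ext h)
    refine ⟨u, hwu, hux', ?_⟩
    rwa [danglingThin_induce_subtree hT (hxw.isChild_of_adj hT hwu hux')] at hk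
  · rintro ⟨u, hwu, hux, hk⟩
    have hwu' := hxw.isChild_of_adj hT hwu hux
    have hu := subtree_subset hT.connected hw hwu'.mem_subtree
    refine ⟨⟨u, hu⟩, hwu, fun h => hux (congrArg Subtype.val h), ?_⟩
    rwa [danglingThin_induce_subtree hT hwu']

lemma childKNeighbor_induce_subtree_iff (hT : G.IsTree) {k : ℕ} {x w : V}
    (hx : x ∈ Subtree G rt v) (hw : w ∈ Subtree G rt v) :
    ChildKNeighbor (G.induce (Subtree G rt v)) ⟨v, mem_subtree_self v⟩ k ⟨x, hx⟩ ⟨w, hw⟩ ↔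
      ChildKNeighbor G rt k x w := by
  rw [ChildKNeighbor, ChildKNeighbor, isChild_induce_subtree_iff hT.connected hx hw]
  exact and_congr_right fun hxw => kNeighbor_induce_subtree_iff hT hxw hx hw

lemma thinness_induce_subtree [Finite V] (hT : G.IsTree) {x w : V} (hx : x ∈ Subtree G rt v)
    (hw : ChildKNeighbor G rt (Thinness G) x w) :
    Thinness (G.induce (Subtree G rt v)) = Thinness G := by
  obtain ⟨hxw, -, u, hwu, hux, hk⟩ := hw
  have hwu' := hxw.isChild_of_adj hT hwu hux
  have hu := subtree_subset hT.connected (subtree_subset hT.connected hx hxw.mem_subtree)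
    hwu'.mem_subtree
  refine le_antisymm (thinness_le_of_embedding (Embedding.induce _)) (hk.trans ?_)
  exact thinness_le_of_embedding (G.induceHomOfLE
    ((supp_deleteEdges_subset_subtree hT hwu').trans (subtree_subset hT.connected hu)))

end InducedSubtree

theorem critical_of_subtree_general [Fintype V] (G : SimpleGraph V) (hT : G.IsTree)
    (rt x v : V) (hcrit : Critical G rt x)
    (hv : v ∈ Subtree G rt v) (hx : x ∈ Subtree G rt v) :
    Critical (G.induce (Subtree G rt v)) ⟨v, hv⟩ ⟨x, hx⟩ := by
  rw [Critical] at hcrit ⊢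
  obtain ⟨w, hw⟩ := Set.nonempty_of_ncard_ne_zero (hcrit ▸ two_ne_zero)
  have hchildren : {w | ChildKNeighbor G rt (Thinness G) x w} ⊆ Set.range Subtype.val :=
    fun w hw => ⟨⟨w, subtree_subset hT.connected hx hw.1.mem_subtree⟩, rfl⟩
  rw [thinness_induce_subtree hT hx hw, ← hcrit,
    ← Set.ncard_preimage_of_injective_subset_range Subtype.val_injective hchildren]
  congr 1
  ext ⟨w, hw⟩
  exact childKNeighbor_induce_subtree_iff hT hx hw

theorem critical_of_subtree [Fintype V] (G : SimpleGraph V) (hT : G.IsTree)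
    (rt x v : V) (hcrit : Critical G rt x) (hanc : IsAncestor G rt v x)
    (hv : v ∈ Subtree G rt v) (hx : x ∈ Subtree G rt v) :
    Critical (G.induce (Subtree G rt v)) ⟨v, hv⟩ ⟨x, hx⟩ :=
  critical_of_subtree_general G hT rt x v hcrit hv hx
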